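/- arXiv:2305.10501 — 2 statements merged into one kernel-verified Lean document; each statement's English description precedes it below -/
import Mathlib

section
/- Fix integers n ≥ 1 and N ≥ n+2. For every f ∈ LC_c(ℝⁿ) and every hyperplane H ∈ Gr(n,n−1), the maximum of J(p) over log affine minorants p ∈ 𝒫_N(f) is at least the maximum of J(q) over log affine minorants q ∈ 𝒫_N(S_H f), where S_H f is the Steiner symmetral of f with respect to H. -/
open MeasureTheory Filter Set Metric

noncomputable section

/-- `n`-dimensional Euclidean space `ℝⁿ`. -/
abbrev Eucl (n : ℕ) : Type := EuclideanSpace ℝ (Fin n)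

/-- The epigraph `epi(ψ) = {(x,t) : t ≥ ψ(x)}` of an extended-real-valued function. -/
def epi {n : ℕ} (ψ : Eucl n → EReal) : Set (Eucl n × ℝ) :=
  {q : Eucl n × ℝ | ψ q.1 ≤ (q.2 : EReal)}

/-- `expNeg t = exp (−t)`, extended so that `exp (−(+∞)) = 0`
(the value at `⊥` is irrelevant: functions in `ℝ ∪ {+∞}` never take the value `⊥`). -/
def expNeg (t : EReal) : ℝ :=
  if t = ⊤ ∨ t = ⊥ then 0 else Real.exp (-t.toReal)

/-- `negLog y = − log y` for `y > 0`, and `+∞` otherwise; for `f = exp(−ψ) ≥ 0`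
this recovers `ψ` from `f`. -/
def negLog (y : ℝ) : EReal :=
  if y ≤ 0 then ⊤ else ((-Real.log y : ℝ) : EReal)

/-- Membership in the class `LC_c(ℝⁿ)`: `f = exp(−ψ)` for a convex (as a function into
`ℝ ∪ {+∞}`, encoded by convexity of the epigraph) lower semicontinuous coercive function `ψ`,
`ψ ≢ +∞`, the origin lies in `dom ψ`, and `dom ψ` is not contained in a hyperplane
(its affine span is everything). -/
def MemLCc {n : ℕ} (f : Eucl n → ℝ) : Prop :=
  ∃ ψ : Eucl n → EReal,
    (∀ x, ψ x ≠ ⊥) ∧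
    Convex ℝ (epi ψ) ∧
    LowerSemicontinuous ψ ∧
    Tendsto ψ (cocompact (Eucl n)) (nhds ⊤) ∧
    (∃ x, ψ x ≠ ⊤) ∧
    ψ 0 ≠ ⊤ ∧
    affineSpan ℝ {x : Eucl n | ψ x ≠ ⊤} = ⊤ ∧
    (∀ x, f x = expNeg (ψ x))

/-- The union of the vertical (upward) rays `{(xᵢ,t) : t ≥ tᵢ}`. -/
def verticalRays {n k : ℕ} (x : Fin k → Eucl n) (t : Fin k → ℝ) : Set (Eucl n × ℝ) :=
  ⋃ i, {q : Eucl n × ℝ | q.1 = x i ∧ t i ≤ q.2}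

/-- `p` is the inner linearization of `ψ` built from `k` points `(xᵢ,tᵢ)` of `epi ψ`:
its epigraph is the convex hull of the union of the vertical rays with those endpoints
(so `p = +∞` outside `conv{x₁,…,x_k}`). -/
def IsInnerLinearization {n : ℕ} (ψ : Eucl n → EReal) (k : ℕ) (p : Eucl n → EReal) : Prop :=
  ∃ (x : Fin k → Eucl n) (t : Fin k → ℝ),
    (∀ i, ψ (x i) ≤ ((t i : ℝ) : EReal)) ∧
    epi p = convexHull ℝ (verticalRays x t)

/-- `𝒫_N(f)`: the set of log affine minorants `exp(−p)` of `f = exp(−ψ)` built from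
`k ≤ N` points of `epi ψ` (at most `N` break points). -/
def PN {n : ℕ} (N : ℕ) (f : Eucl n → ℝ) : Set (Eucl n → ℝ) :=
  {q : Eucl n → ℝ | ∃ k : ℕ, 1 ≤ k ∧ k ≤ N ∧ ∃ p : Eucl n → EReal,
    IsInnerLinearization (fun x => negLog (f x)) k p ∧ ∀ x, q x = expNeg (p x)}

/-- The total mass `J(f) = ∫ f`. -/
def totalMass {n : ℕ} (f : Eucl n → ℝ) : ℝ := ∫ x, f x

/-- `G_{n,N}(f) = min_{p ∈ 𝒫_N(f)} (J(f) − J(p))`. -/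
def Gfun {n : ℕ} (N : ℕ) (f : Eucl n → ℝ) : ℝ :=
  sInf {d : ℝ | ∃ q ∈ PN N f, d = totalMass f - totalMass q}

/-- `g` is the symmetric decreasing rearrangement of `f`: for every `t > 0` the superlevel set
`{g ≥ t}` is the closed Euclidean ball centered at the origin (possibly degenerate or empty)
with the same Lebesgue measure as `{f ≥ t}`. -/
def IsSDR {n : ℕ} (f g : Eucl n → ℝ) : Prop :=
  ∀ t : ℝ, 0 < t →
    ({x : Eucl n | t ≤ g x} = ∅ ∨
      ∃ r : ℝ, 0 ≤ r ∧ {x : Eucl n | t ≤ g x} = closedBall (0 : Eucl n) r) ∧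
    volume {x : Eucl n | t ≤ g x} = volume {x : Eucl n | t ≤ f x}

/-- The (strict, upper) hypograph `{(x,s) : 0 < s ≤ f(x)}` of a nonnegative function; this is the
region between the graph of `f` and the hyperplane `ℝⁿ × {0}`, used for Steiner symmetrization. -/
def hyp {n : ℕ} (f : Eucl n → ℝ) : Set (Eucl n × ℝ) :=
  {q : Eucl n × ℝ | 0 < q.2 ∧ q.2 ≤ f q.1}

/-- The chord parameters: `lineSet u A h = {t : h + t·ũ ∈ A}`, where `ũ = (u,0)`. -/
def lineSet {n : ℕ} (u : Eucl n) (A : Set (Eucl n × ℝ)) (h : Eucl n × ℝ) : Set ℝ :=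
  {t : ℝ | (h.1 + t • u, h.2) ∈ A}

/-- The orthogonal projection of `A ⊆ ℝⁿ × ℝ` onto the hyperplane `H̃ = u^⊥ × ℝ`. -/
def projSet {n : ℕ} (u : Eucl n) (A : Set (Eucl n × ℝ)) : Set (Eucl n × ℝ) :=
  {h : Eucl n × ℝ | (inner ℝ h.1 u : ℝ) = 0 ∧ (lineSet u A h).Nonempty}

/-- The Steiner symmetral of a set `A ⊆ ℝⁿ × ℝ` with respect to the hyperplane `u^⊥ × ℝ`:
`S_H A = {h + t·ũ : h ∈ proj_H A, |t| ≤ (A⁺(h) − A⁻(h))/2}`. -/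
def steinerSet {n : ℕ} (u : Eucl n) (A : Set (Eucl n × ℝ)) : Set (Eucl n × ℝ) :=
  {q : Eucl n × ℝ | ∃ h ∈ projSet u A, ∃ t : ℝ,
    |t| ≤ (sSup (lineSet u A h) - sInf (lineSet u A h)) / 2 ∧ q = (h.1 + t • u, h.2)}

/-- `g = S_H f` is the Steiner symmetral of `f` with respect to the hyperplane `H = u^⊥`:
the hypograph of `g` is the Steiner symmetral of the hypograph of `f` w.r.t. `H̃ = H × ℝ`. -/
def IsSteinerSymmetral {n : ℕ} (u : Eucl n) (f g : Eucl n → ℝ) : Prop :=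
  hyp g = steinerSet u (hyp f)

/-!
Write a minorant `q ∈ 𝒫_N(S_H f)` as `exp (-p)`, `p` the inner linearization of points
`(yᵢ, tᵢ)` with `yᵢ = zᵢ + τᵢ u`, `zᵢ ⊥ u`. Since `(yᵢ, e^{-tᵢ})` lies in the Steiner symmetral of
`hyp f`, the chord `{β : ψ (zᵢ + β u) ≤ tᵢ}` is an interval with midpoint `μᵢ` and half-length
at least `|τᵢ|`, so the points `(zᵢ + (μᵢ ± τᵢ) u, tᵢ)` lie in `epi ψ` and define minorants
`q₊, q₋ ∈ 𝒫_N(f)`. On each line parallel to `u`, a superlevel set of `q`, of `q₊`, or of the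
reflection of `q₋` in `u^⊥` is the image of one and the same convex set of weights `l` under
`l ↦ ∑ lᵢ τᵢ`, `∑ lᵢ (μᵢ + τᵢ)`, `∑ lᵢ (τᵢ - μᵢ)` respectively. The first map is the average of
the other two, so the lengths of these intervals satisfy `2 |I| ≤ |I₊| + |I₋|`, and the layer cake
formula and Fubini give `2 J(q) ≤ J(q₊) + J(q₋)`. The supremum over `𝒫_N(f)` is finite because
a coercive convex `ψ` grows at least linearly, which makes `f` integrable.
-/

open scoped ENNReal Topology

section ExpNeg

lemma expNeg_nonneg (a : EReal) : 0 ≤ expNeg a := by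
  unfold expNeg; split_ifs <;> positivity

@[simp] lemma expNeg_coe (a : ℝ) : expNeg a = Real.exp (-a) := by simp [expNeg]

@[simp] lemma expNeg_top : expNeg ⊤ = 0 := by simp [expNeg]

lemma expNeg_le_expNeg {a b : EReal} (ha : a ≠ ⊥) (hab : a ≤ b) : expNeg b ≤ expNeg a := by
  induction b with
  | bot => exact absurd (le_bot_iff.1 hab) ha
  | top => simpa using expNeg_nonneg a
  | coe b =>
    induction a with
    | bot => exact absurd rfl ha
    | top => simp at hab
    | coe a => simpa using EReal.coe_le_coe_iff.1 hab

lemma le_expNeg_iff {a : EReal} (ha : a ≠ ⊥) {s : ℝ} (hs : 0 < s) :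
    s ≤ expNeg a ↔ a ≤ ((-Real.log s : ℝ) : EReal) := by
  induction a with
  | bot => exact absurd rfl ha
  | top => simp [hs.not_ge]
  | coe a =>
    rw [expNeg_coe, EReal.coe_le_coe_iff, ← Real.log_le_iff_le_exp hs]
    constructor <;> intro h <;> linarith

lemma negLog_expNeg {a : EReal} (ha : a ≠ ⊥) : negLog (expNeg a) = a := by
  induction a with
  | bot => exact absurd rfl ha
  | top => simp [negLog]
  | coe a => simp [negLog, (Real.exp_pos _).not_ge]

lemma negLog_le_coe_iff {y t : ℝ} : negLog y ≤ (t : EReal) ↔ Real.exp (-t) ≤ y := by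
  unfold negLog
  split_ifs with hy
  · simpa using (hy.trans_lt (Real.exp_pos (-t))).not_ge
  · rw [EReal.coe_le_coe_iff, neg_le, Real.le_log_iff_exp_le (not_le.1 hy)]

end ExpNeg

section Epigraph

variable {n : ℕ}

lemma le_of_epi_subset {p ψ : Eucl n → EReal} (h : epi p ⊆ epi ψ) (z : Eucl n) :
    ψ z ≤ p z :=
  EReal.le_of_forall_lt_iff_le.1 fun s hs => h (show (z, s) ∈ epi p from hs.le)

lemma epi_injective : Function.Injective (epi (n := n)) := fun _ _ h =>
  funext fun z => le_antisymm (le_of_epi_subset h.ge z) (le_of_epi_subset h.le z)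

lemma convex_setOf_add_smul_le {ψ : Eucl n → EReal} (hψ : Convex ℝ (epi ψ)) (y u : Eucl n)
    (c : ℝ) : Convex ℝ {β : ℝ | ψ (y + β • u) ≤ c} := by
  have : {β : ℝ | ψ (y + β • u) ≤ c} =
      AffineMap.lineMap ((y, c) : Eucl n × ℝ) (y + u, c) ⁻¹' epi ψ := by
    ext β
    simp [epi, AffineMap.lineMap_apply_module', add_comm]
  exact this ▸ hψ.affine_preimage _

end Epigraph

section InnerLinearization

variable {E F : Type*} [NormedAddCommGroup E] [NormedSpace ℝ E] [NormedAddCommGroup F]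
  [NormedSpace ℝ F] {k : ℕ}

def convexWeights (x : Fin k → E) (z : E) : Set (Fin k → ℝ) :=
  {l | l ∈ stdSimplex ℝ (Fin k) ∧ ∑ i, l i • x i = z}

/-- The inner linearization `p_X` of the points `(xᵢ, tᵢ)`; it is `⊤` (as `sInf ∅`) off
`conv {xᵢ}`. -/
def innerLinearization (x : Fin k → E) (t : Fin k → ℝ) (z : E) : EReal :=
  sInf ((fun l => ((∑ i, l i * t i : ℝ) : EReal)) '' convexWeights x z)

/-- The log affine function `exp (-p_X)`. -/
def logAffine (x : Fin k → E) (t : Fin k → ℝ) (z : E) : ℝ :=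
  expNeg (innerLinearization x t z)

variable {x : Fin k → E} {t : Fin k → ℝ} {z : E}

lemma isCompact_convexWeights (x : Fin k → E) (z : E) : IsCompact (convexWeights x z) :=
  (isCompact_stdSimplex ℝ (Fin k)).inter_right <| isClosed_eq (by fun_prop) continuous_const

lemma innerLinearization_of_empty (h : convexWeights x z = ∅) : innerLinearization x t z = ⊤ := by
  simp [innerLinearization, h]

lemma exists_innerLinearization_eq (h : (convexWeights x z).Nonempty) :
    ∃ l ∈ convexWeights x z, innerLinearization x t z = ((∑ i, l i * t i : ℝ) : EReal) := by
  obtain ⟨l, hl, hmin⟩ := (isCompact_convexWeights x z).exists_isMinOn h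
    (f := fun l => ∑ i, l i * t i) (by fun_prop)
  refine ⟨l, hl, le_antisymm (sInf_le ⟨l, hl, rfl⟩) (le_sInf ?_)⟩
  rintro _ ⟨l', hl', rfl⟩
  exact EReal.coe_le_coe (hmin hl')

lemma innerLinearization_ne_bot (x : Fin k → E) (t : Fin k → ℝ) (z : E) :
    innerLinearization x t z ≠ ⊥ := by
  rcases (convexWeights x z).eq_empty_or_nonempty with h | h
  · simp [innerLinearization_of_empty h]
  · obtain ⟨l, -, hl⟩ := exists_innerLinearization_eq (t := t) h
    simp [hl]

lemma innerLinearization_le_coe_iff {s : ℝ} :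
    innerLinearization x t z ≤ s ↔ ∃ l ∈ convexWeights x z, ∑ i, l i * t i ≤ s := by
  refine ⟨fun h => ?_, ?_⟩
  · rcases (convexWeights x z).eq_empty_or_nonempty with he | hne
    · simp [innerLinearization_of_empty he] at h
    obtain ⟨l, hl, hlt⟩ := exists_innerLinearization_eq (t := t) hne
    rw [hlt, EReal.coe_le_coe_iff] at h
    exact ⟨l, hl, h⟩
  · rintro ⟨l, hl, hls⟩
    exact (sInf_le (mem_image_of_mem _ hl)).trans (EReal.coe_le_coe hls)

lemma innerLinearization_comp_linearEquiv (A : E ≃ₗ[ℝ] F) (x : Fin k → E) (t : Fin k → ℝ)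
    (z : E) : innerLinearization (A ∘ x) t (A z) = innerLinearization x t z := by
  have : convexWeights (A ∘ x) (A z) = convexWeights x z := by
    ext l
    simp [convexWeights, ← map_smul, ← map_sum, A.injective.eq_iff]
  simp only [innerLinearization, this]

lemma isCompact_setOf_innerLinearization_le (x : Fin k → E) (t : Fin k → ℝ) (c : ℝ) :
    IsCompact {z | innerLinearization x t z ≤ c} := by
  have : {z | innerLinearization x t z ≤ c} =
      (fun l => ∑ i, l i • x i) '' {l | l ∈ stdSimplex ℝ (Fin k) ∧ ∑ i, l i * t i ≤ c} := by
    ext z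
    simp only [mem_ofPred_eq, innerLinearization_le_coe_iff, convexWeights, mem_image]
    constructor
    · rintro ⟨l, ⟨hl, hx⟩, ht⟩; exact ⟨l, ⟨hl, ht⟩, hx⟩
    · rintro ⟨l, ⟨hl, ht⟩, hx⟩; exact ⟨l, ⟨hl, hx⟩, ht⟩
  rw [this]
  refine ((isCompact_stdSimplex ℝ _).inter_right ?_).image (by fun_prop)
  exact isClosed_le (f := fun l : Fin k → ℝ => ∑ i, l i * t i) (by fun_prop) continuous_const

lemma measurable_logAffine [MeasurableSpace E] [BorelSpace E] (x : Fin k → E) (t : Fin k → ℝ) :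
    Measurable (logAffine x t) := by
  refine measurable_of_Ici fun σ => ?_
  rcases le_or_gt σ 0 with hσ | hσ
  · convert MeasurableSet.univ
    exact eq_univ_of_forall fun z => hσ.trans (expNeg_nonneg _)
  · have : logAffine x t ⁻¹' Ici σ = {z | innerLinearization x t z ≤ ↑(-Real.log σ)} := by
      ext z
      exact le_expNeg_iff (innerLinearization_ne_bot x t z) hσ
    rw [this]
    exact (isCompact_setOf_innerLinearization_le x t _).isClosed.measurableSet

end InnerLinearization

section InnerLinearizationEpigraph

variable {n k : ℕ} {x : Fin k → Eucl n} {t : Fin k → ℝ}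

lemma convex_setOf_exists_convexWeights (x : Fin k → Eucl n) (t : Fin k → ℝ) :
    Convex ℝ {q : Eucl n × ℝ | ∃ l ∈ convexWeights x q.1, ∑ i, l i * t i ≤ q.2} := by
  rintro q₁ ⟨l₁, ⟨hl₁, hx₁⟩, ht₁⟩ q₂ ⟨l₂, ⟨hl₂, hx₂⟩, ht₂⟩ a b ha hb hab
  refine ⟨a • l₁ + b • l₂, ⟨convex_stdSimplex ℝ _ hl₁ hl₂ ha hb hab, ?_⟩, ?_⟩
  · simp only [Pi.add_apply, Pi.smul_apply, smul_eq_mul, add_smul, mul_smul,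
      Finset.sum_add_distrib, ← Finset.smul_sum, hx₁, hx₂, Prod.fst_add, Prod.smul_fst]
  · simp only [Pi.add_apply, Pi.smul_apply, smul_eq_mul, add_mul, mul_assoc,
      Finset.sum_add_distrib, ← Finset.mul_sum, Prod.snd_add, Prod.smul_snd]
    gcongr

lemma epi_innerLinearization (x : Fin k → Eucl n) (t : Fin k → ℝ) :
    epi (innerLinearization x t) = convexHull ℝ (verticalRays x t) := by
  have hepi : epi (innerLinearization x t) =
      {q : Eucl n × ℝ | ∃ l ∈ convexWeights x q.1, ∑ i, l i * t i ≤ q.2} := by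
    ext q; exact innerLinearization_le_coe_iff
  rw [hepi]
  refine subset_antisymm ?_ (convexHull_min ?_ (convex_setOf_exists_convexWeights x t))
  · rintro ⟨z, s⟩ ⟨l, ⟨hl, hx⟩, hs⟩
    -- `(z, s)` is the `l`-combination of the points `(xᵢ, tᵢ + (s - ∑ lⱼ tⱼ))` of the rays
    have hmem := (convex_convexHull ℝ (verticalRays x t)).sum_mem (fun i _ => hl.1 i) hl.2
      (z := fun i => (x i, t i + (s - ∑ j, l j * t j))) fun i _ => subset_convexHull ℝ _ <|
        mem_iUnion.2 ⟨i, rfl, le_add_of_nonneg_right (sub_nonneg.2 hs)⟩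
    convert hmem using 1
    refine Prod.ext ?_ ?_
    · simpa [Prod.fst_sum] using hx.symm
    · simp [Prod.snd_sum, mul_add, Finset.sum_add_distrib, ← Finset.sum_mul, hl.2]
  · rintro q ⟨i, ⟨j, rfl⟩, hq⟩
    refine ⟨Pi.single j 1, ⟨single_mem_stdSimplex ℝ j, ?_⟩, ?_⟩
    · simp [hq.1]
    · simpa [Pi.single_apply] using hq.2

lemma le_innerLinearization {ψ : Eucl n → EReal} (hconv : Convex ℝ (epi ψ))
    (hx : ∀ i, ψ (x i) ≤ t i) (z : Eucl n) : ψ z ≤ innerLinearization x t z := by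
  refine le_of_epi_subset ?_ z
  rw [epi_innerLinearization]
  refine convexHull_min ?_ hconv
  rintro q ⟨_, ⟨i, rfl⟩, hq⟩
  exact show ψ q.1 ≤ q.2 from hq.1 ▸ (hx i).trans (EReal.coe_le_coe hq.2)

lemma mem_PN_iff {N : ℕ} {f q : Eucl n → ℝ} :
    q ∈ PN N f ↔ ∃ k, 1 ≤ k ∧ k ≤ N ∧ ∃ (x : Fin k → Eucl n) (t : Fin k → ℝ),
      (∀ i, negLog (f (x i)) ≤ t i) ∧ q = logAffine x t := by
  constructor
  · rintro ⟨k, hk₁, hkN, p, ⟨x, t, hxt, hp⟩, hq⟩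
    obtain rfl : p = innerLinearization x t :=
      epi_injective (hp.trans (epi_innerLinearization x t).symm)
    exact ⟨k, hk₁, hkN, x, t, hxt, funext hq⟩
  · rintro ⟨k, hk₁, hkN, x, t, hxt, rfl⟩
    exact ⟨k, hk₁, hkN, _, ⟨x, t, hxt, epi_innerLinearization x t⟩, fun _ => rfl⟩

end InnerLinearizationEpigraph

lemma Set.OrdConnected.ediam_le_volume {s : Set ℝ} (hs : s.OrdConnected) : ediam s ≤ volume s :=
  ediam_le fun a ha b hb => by
    rw [edist_dist, Real.dist_eq, abs_sub_comm, ← Real.volume_interval]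
    exact measure_mono (hs.uIcc_subset ha hb)

lemma two_mul_ediam_image_le {α : Type*} {S : Set α} {φ φ₁ φ₂ : α → ℝ}
    (h : ∀ a ∈ S, 2 * φ a = φ₁ a + φ₂ a) :
    2 * ediam (φ '' S) ≤ ediam (φ₁ '' S) + ediam (φ₂ '' S) := by
  rw [mul_comm, ← ENNReal.le_div_iff_mul_le (by simp) (by simp), ediam_image_le_iff]
  intro a ha b hb
  rw [ENNReal.le_div_iff_mul_le (by simp) (by simp), mul_comm]
  calc 2 * edist (φ a) (φ b) = edist (2 * φ a) (2 * φ b) := by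
        simpa [ENNReal.smul_def] using (edist_smul₀ (2 : ℝ) (φ a) (φ b)).symm
    _ = edist (φ₁ a + φ₂ a) (φ₁ b + φ₂ b) := by rw [h a ha, h b hb]
    _ ≤ edist (φ₁ a) (φ₁ b) + edist (φ₂ a) (φ₂ b) := edist_add_add_le _ _ _ _
    _ ≤ ediam (φ₁ '' S) + ediam (φ₂ '' S) := by
        gcongr <;> exact edist_le_ediam_of_mem (mem_image_of_mem _ ha) (mem_image_of_mem _ hb)

lemma two_mul_volume_image_le {α : Type*} {S : Set α} {φ φ₁ φ₂ : α → ℝ}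
    (h : ∀ a ∈ S, 2 * φ a = φ₁ a + φ₂ a) (h₁ : (φ₁ '' S).OrdConnected)
    (h₂ : (φ₂ '' S).OrdConnected) :
    2 * volume (φ '' S) ≤ volume (φ₁ '' S) + volume (φ₂ '' S) :=
  calc 2 * volume (φ '' S) ≤ 2 * ediam (φ '' S) := by gcongr; exact Real.volume_le_diam _
    _ ≤ ediam (φ₁ '' S) + ediam (φ₂ '' S) := two_mul_ediam_image_le h
    _ ≤ volume (φ₁ '' S) + volume (φ₂ '' S) := by
        gcongr
        exacts [h₁.ediam_le_volume, h₂.ediam_le_volume]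

lemma two_mul_lintegral_le_of_two_mul_measure_le {α : Type*} [MeasurableSpace α] {μ : Measure α}
    {F F₁ F₂ : α → ℝ} (hF : 0 ≤ F) (hF₁ : 0 ≤ F₁) (hF₂ : 0 ≤ F₂) (hFm : AEMeasurable F μ)
    (hF₁m : AEMeasurable F₁ μ) (hF₂m : AEMeasurable F₂ μ)
    (h : ∀ σ > 0, 2 * μ {a | σ ≤ F a} ≤ μ {a | σ ≤ F₁ a} + μ {a | σ ≤ F₂ a}) :
    2 * ∫⁻ a, ENNReal.ofReal (F a) ∂μ ≤
      ∫⁻ a, ENNReal.ofReal (F₁ a) ∂μ + ∫⁻ a, ENNReal.ofReal (F₂ a) ∂μ := by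
  have hmeas (G : α → ℝ) : Measurable fun σ : ℝ => μ {a | σ ≤ G a} :=
    Antitone.measurable fun _ _ hσ => measure_mono fun _ ha => hσ.trans ha
  rw [lintegral_eq_lintegral_meas_le μ (.of_forall hF) hFm,
    lintegral_eq_lintegral_meas_le μ (.of_forall hF₁) hF₁m,
    lintegral_eq_lintegral_meas_le μ (.of_forall hF₂) hF₂m, ← lintegral_const_mul _ (hmeas F),
    ← lintegral_add_left (hmeas F₁)]
  exact setLIntegral_mono ((hmeas F₁).add (hmeas F₂)) h

lemma two_mul_lintegral_le_of_fibers {α W : Type*} [MeasurableSpace α] [MeasurableSpace W]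
    {μ : Measure α} {ν : Measure W} [SFinite ν] {Φ : ℝ × W → α}
    (hΦ : MeasurePreserving Φ (volume.prod ν) μ) {G G₁ G₂ : α → ℝ≥0∞} (hG : Measurable G)
    (hG₁ : Measurable G₁) (hG₂ : Measurable G₂)
    (h : ∀ w, 2 * ∫⁻ β, G (Φ (β, w)) ≤ (∫⁻ β, G₁ (Φ (β, w))) + ∫⁻ β, G₂ (Φ (β, w))) :
    2 * ∫⁻ a, G a ∂μ ≤ ∫⁻ a, G₁ a ∂μ + ∫⁻ a, G₂ a ∂μ := by
  have hfib {H : α → ℝ≥0∞} (hH : Measurable H) :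
      ∫⁻ a, H a ∂μ = ∫⁻ w, (∫⁻ β, H (Φ (β, w))) ∂ν := by
    rw [← hΦ.lintegral_comp hH]
    exact lintegral_prod_symm' (H ∘ Φ) (hH.comp hΦ.measurable)
  rw [hfib hG, hfib hG₁, hfib hG₂, ← lintegral_const_mul' 2 _ (by simp),
    ← lintegral_add_left (f := fun w => ∫⁻ β, G₁ (Φ (β, w)))
      (hG₁.comp hΦ.measurable).lintegral_prod_left']
  exact lintegral_mono h

lemma exists_orthonormalBasis_zero_eq {m : ℕ} {u : Eucl (m + 1)} (hu : ‖u‖ = 1) :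
    ∃ b : OrthonormalBasis (Fin (m + 1)) ℝ (Eucl (m + 1)), b 0 = u := by
  have horth : Orthonormal ℝ (({0} : Set (Fin (m + 1))).domRestrict fun _ => u) :=
    ⟨fun _ => hu, fun i j hij => absurd (Subsingleton.elim i j) hij⟩
  obtain ⟨b, hb⟩ := horth.exists_orthonormalBasis_extension_of_card_eq (by simp)
  exact ⟨b, hb 0 rfl⟩

lemma exists_measurePreserving_add_smul {n : ℕ} {u : Eucl n} (hu : ‖u‖ = 1) :
    ∃ (m : ℕ) (Y : (Fin m → ℝ) → Eucl n), (∀ w, inner ℝ (Y w) u = 0) ∧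
      MeasurePreserving (fun p : ℝ × (Fin m → ℝ) => Y p.2 + p.1 • u) (volume.prod volume)
        volume := by
  obtain ⟨m, rfl⟩ : ∃ m, n = m + 1 := Nat.exists_eq_succ_of_ne_zero <| by
    rintro rfl
    simp [Subsingleton.elim u 0] at hu
  obtain ⟨b, rfl⟩ := exists_orthonormalBasis_zero_eq hu
  refine ⟨m, fun w => ∑ i, w i • b i.succ, fun w => ?_, ?_⟩
  · simp [sum_inner, real_inner_smul_left, b.orthonormal.2 (Fin.succ_ne_zero _)]
  · have h := b.measurePreserving_repr_symm.comp ((PiLp.volume_preserving_toLp _).comp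
      (volume_preserving_piFinSuccAbove (fun _ : Fin (m + 1) => ℝ) 0).symm)
    convert h using 1
    · funext ⟨β, w⟩
      simp [← b.sum_repr_symm, Fin.sum_univ_succ, Fin.consEquiv, add_comm]
    · exact (Measure.volume_eq_prod _ _).symm

section Slices

variable {n k : ℕ} {u : Eucl n} {z : Fin k → Eucl n}

lemma add_smul_eq_add_smul_iff (hu : ‖u‖ = 1) {v v' : Eucl n} (hv : inner ℝ v u = 0)
    (hv' : inner ℝ v' u = 0) {a a' : ℝ} : v + a • u = v' + a' • u ↔ v = v' ∧ a = a' := by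
  refine ⟨fun h => ?_, fun ⟨hv, ha⟩ => hv ▸ ha ▸ rfl⟩
  have hinner (w : Eucl n) (b : ℝ) (hw : inner ℝ w u = 0) : inner ℝ (w + b • u) u = b := by
    simp [inner_add_left, real_inner_smul_left, hw, hu]
  have ha : a = a' := by rw [← hinner v a hv, h, hinner v' a' hv']
  exact ⟨add_right_cancel (ha ▸ h), ha⟩

lemma setOf_innerLinearization_add_smul_le (hu : ‖u‖ = 1) (hz : ∀ i, inner ℝ (z i) u = 0)
    (t γ : Fin k → ℝ) {y : Eucl n} (hy : inner ℝ y u = 0) (c : ℝ) :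
    {β : ℝ | innerLinearization (fun i => z i + γ i • u) t (y + β • u) ≤ c} =
      (fun l => ∑ i, l i * γ i) '' {l | l ∈ convexWeights z y ∧ ∑ i, l i * t i ≤ c} := by
  ext β
  have hsum (l : Fin k → ℝ) :
      ∑ i, l i • (z i + γ i • u) = ∑ i, l i • z i + (∑ i, l i * γ i) • u := by
    simp [smul_add, smul_smul, Finset.sum_add_distrib, Finset.sum_smul]
  have hperp (l : Fin k → ℝ) : inner ℝ (∑ i, l i • z i) u = 0 := by
    simp [sum_inner, real_inner_smul_left, hz]
  simp only [mem_ofPred_eq, innerLinearization_le_coe_iff, convexWeights, mem_image, hsum,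
    add_smul_eq_add_smul_iff hu (hperp _) hy]
  constructor
  · rintro ⟨l, ⟨hl, hy, hβ⟩, ht⟩; exact ⟨l, ⟨⟨hl, hy⟩, ht⟩, hβ⟩
  · rintro ⟨l, ⟨⟨hl, hy⟩, ht⟩, hβ⟩; exact ⟨l, ⟨hl, hy, hβ⟩, ht⟩

lemma two_mul_volume_setOf_innerLinearization_le (hu : ‖u‖ = 1)
    (hz : ∀ i, inner ℝ (z i) u = 0) (t : Fin k → ℝ) {γ γ₁ γ₂ : Fin k → ℝ}
    (hγ : ∀ i, 2 * γ i = γ₁ i + γ₂ i) {y : Eucl n} (hy : inner ℝ y u = 0) (c : ℝ) :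
    2 * volume {β : ℝ | innerLinearization (fun i => z i + γ i • u) t (y + β • u) ≤ c} ≤
      volume {β : ℝ | innerLinearization (fun i => z i + γ₁ i • u) t (y + β • u) ≤ c} +
        volume {β : ℝ | innerLinearization (fun i => z i + γ₂ i • u) t (y + β • u) ≤ c} := by
  have hconn (γ' : Fin k → ℝ) : ((fun l => ∑ i, l i * γ' i) ''
      {l | l ∈ convexWeights z y ∧ ∑ i, l i * t i ≤ c}).OrdConnected := by
    rw [← setOf_innerLinearization_add_smul_le hu hz t γ' hy]
    refine (convex_setOf_add_smul_le ?_ y u c).ordConnected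
    rw [epi_innerLinearization]
    exact convex_convexHull ℝ _
  simp only [setOf_innerLinearization_add_smul_le hu hz t _ hy]
  refine two_mul_volume_image_le (fun l _ => ?_) (hconn γ₁) (hconn γ₂)
  simp only [Finset.mul_sum, ← Finset.sum_add_distrib, ← mul_add, ← hγ]
  ring_nf

lemma two_mul_lintegral_logAffine_le (hu : ‖u‖ = 1) (hz : ∀ i, inner ℝ (z i) u = 0)
    (t : Fin k → ℝ) {γ γ₁ γ₂ : Fin k → ℝ} (hγ : ∀ i, 2 * γ i = γ₁ i + γ₂ i) :
    2 * ∫⁻ v, ENNReal.ofReal (logAffine (fun i => z i + γ i • u) t v) ≤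
      (∫⁻ v, ENNReal.ofReal (logAffine (fun i => z i + γ₁ i • u) t v)) +
        ∫⁻ v, ENNReal.ofReal (logAffine (fun i => z i + γ₂ i • u) t v) := by
  obtain ⟨m, Y, hY, hΦ⟩ := exists_measurePreserving_add_smul hu
  have hmeas (γ' : Fin k → ℝ) := measurable_logAffine (fun i => z i + γ' i • u) t
  refine two_mul_lintegral_le_of_fibers hΦ (hmeas γ).ennreal_ofReal (hmeas γ₁).ennreal_ofReal
    (hmeas γ₂).ennreal_ofReal fun w => ?_
  have hline (γ' : Fin k → ℝ) :
      AEMeasurable fun β : ℝ => logAffine (fun i => z i + γ' i • u) t (Y w + β • u) :=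
    ((hmeas γ').comp (by fun_prop)).aemeasurable
  refine two_mul_lintegral_le_of_two_mul_measure_le (fun _ => expNeg_nonneg _)
    (fun _ => expNeg_nonneg _) (fun _ => expNeg_nonneg _) (hline γ) (hline γ₁) (hline γ₂)
    fun σ hσ => ?_
  simp only [logAffine, le_expNeg_iff (innerLinearization_ne_bot _ _ _) hσ]
  exact two_mul_volume_setOf_innerLinearization_le hu hz t hγ (hY w) _

lemma lintegral_logAffine_add_neg_smul
    (hz : ∀ i, inner ℝ (z i) u = 0) (t γ : Fin k → ℝ) :
    ∫⁻ v, ENNReal.ofReal (logAffine (fun i => z i + (-γ i) • u) t v) =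
      ∫⁻ v, ENNReal.ofReal (logAffine (fun i => z i + γ i • u) t v) := by
  set R := Submodule.reflection (ℝ ∙ u)ᗮ
  have hR : (fun i => z i + (-γ i) • u) = R.toLinearEquiv ∘ fun i => z i + γ i • u := by
    funext i
    have hzi : z i ∈ (ℝ ∙ u)ᗮ := Submodule.mem_orthogonal_singleton_iff_inner_left.2 (hz i)
    simp [R, Submodule.reflection_mem_subspace_eq_self hzi,
      Submodule.reflection_orthogonalComplement_singleton_eq_neg]
  rw [hR, ← R.measurePreserving.lintegral_comp (measurable_logAffine _ _).ennreal_ofReal]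
  congr with v
  exact congrArg (fun a => ENNReal.ofReal (expNeg a))
    (innerLinearization_comp_linearEquiv R.toLinearEquiv _ t v)

end Slices

lemma isCompact_setOf_le_of_tendsto_cocompact {X : Type*} [TopologicalSpace X] {ψ : X → EReal}
    (hlsc : LowerSemicontinuous ψ) (hcoer : Tendsto ψ (cocompact X) (𝓝 ⊤)) (c : ℝ) :
    IsCompact {x | ψ x ≤ c} := by
  obtain ⟨K, hK, hKc⟩ := mem_cocompact.1 (hcoer (Ioi_mem_nhds (EReal.coe_lt_top c)))
  refine hK.of_isClosed_subset (hlsc.isClosed_preimage c) fun x hx => ?_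
  by_contra hxK
  exact not_le.2 (hKc hxK) (show ψ x ≤ c from hx)

lemma mem_of_abs_sub_midpoint_le {S : Set ℝ} (hc : IsCompact S) (hS : S.OrdConnected)
    (hne : S.Nonempty) {β : ℝ} (hβ : |β - (sSup S + sInf S) / 2| ≤ (sSup S - sInf S) / 2) :
    β ∈ S := by
  obtain ⟨h₁, h₂⟩ := abs_le.1 hβ
  exact hS.out (hc.sInf_mem hne) (hc.sSup_mem hne) ⟨by linarith, by linarith⟩

section Steiner

variable {n : ℕ} {ψ : Eucl n → EReal}

lemma exists_add_smul_of_isSteinerSymmetral (hbot : ∀ x, ψ x ≠ ⊥) (hconv : Convex ℝ (epi ψ))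
    (hlsc : LowerSemicontinuous ψ) (hcoer : Tendsto ψ (cocompact (Eucl n)) (𝓝 ⊤))
    {f g : Eucl n → ℝ} (hf : ∀ x, f x = expNeg (ψ x)) {u : Eucl n} (hu : ‖u‖ = 1)
    (hg : IsSteinerSymmetral u f g) {y : Eucl n} {t : ℝ} (hy : negLog (g y) ≤ t) :
    ∃ (z : Eucl n) (τ μ : ℝ), inner ℝ z u = 0 ∧ y = z + τ • u ∧
      ψ (z + (μ + τ) • u) ≤ t ∧ ψ (z + (μ - τ) • u) ≤ t := by
  have hmem : (y, Real.exp (-t)) ∈ steinerSet u (hyp f) :=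
    hg ▸ ⟨Real.exp_pos _, negLog_le_coe_iff.1 hy⟩
  obtain ⟨⟨z, s⟩, ⟨hz, hne⟩, τ, hτ, hyz⟩ := hmem
  obtain ⟨rfl, rfl⟩ := Prod.mk.injEq _ _ _ _ ▸ hyz
  have hline : lineSet u (hyp f) (z, Real.exp (-t)) = {β : ℝ | ψ (z + β • u) ≤ t} := by
    ext β
    simp [lineSet, hyp, Real.exp_pos, hf, le_expNeg_iff (hbot _) (Real.exp_pos _)]
  rw [hline] at hne hτ
  set S := {β : ℝ | ψ (z + β • u) ≤ t}
  have hc : IsCompact S := by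
    have hiso : Isometry fun β : ℝ => z + β • u := Isometry.of_dist_eq fun β₁ β₂ => by
      simp [dist_eq_norm, ← sub_smul, norm_smul, hu]
    exact hiso.isClosedEmbedding.isProperMap.isCompact_preimage
      (isCompact_setOf_le_of_tendsto_cocompact hlsc hcoer t)
  have hS := (convex_setOf_add_smul_le hconv z u t).ordConnected
  refine ⟨z, τ, (sSup S + sInf S) / 2, hz, rfl, mem_of_abs_sub_midpoint_le hc hS hne ?_,
    mem_of_abs_sub_midpoint_le hc hS hne ?_⟩
  · simpa using hτ
  · simpa [abs_neg] using hτ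

end Steiner

lemma integrable_exp_neg_mul_norm {E : Type*} [NormedAddCommGroup E] [NormedSpace ℝ E]
    [FiniteDimensional ℝ E] [MeasurableSpace E] [BorelSpace E] [Nontrivial E] (μ : Measure E)
    [μ.IsAddHaarMeasure] {ε : ℝ} (hε : 0 < ε) :
    Integrable (fun x : E => Real.exp (-(ε * ‖x‖))) μ := by
  refine (integrable_fun_norm_addHaar μ (f := fun r => Real.exp (-(ε * r)))).2 ?_
  refine (integrableOn_rpow_mul_exp_neg_mul_rpow (s := (Module.finrank ℝ E - 1 : ℕ)) (p := 1)
    (neg_one_lt_zero.trans_le (Nat.cast_nonneg _)) one_pos hε).congr_fun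
    (fun r _ => ?_) measurableSet_Ioi
  simp [Real.rpow_natCast, neg_mul]

lemma LowerSemicontinuous.exists_coe_le_of_isCompact {X : Type*} [TopologicalSpace X]
    {ψ : X → EReal} (hlsc : LowerSemicontinuous ψ) (hbot : ∀ x, ψ x ≠ ⊥) {K : Set X}
    (hK : IsCompact K) : ∃ m : ℝ, ∀ x ∈ K, (m : EReal) ≤ ψ x := by
  rcases K.eq_empty_or_nonempty with rfl | hne
  · exact ⟨0, by simp⟩
  obtain ⟨x₀, -, hmin⟩ := LowerSemicontinuousOn.exists_isMinOn hne hK (hlsc.lowerSemicontinuousOn K)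
  exact ⟨(ψ x₀).toReal, fun x hx => (EReal.coe_toReal_le (hbot x₀)).trans (hmin hx)⟩

section Coercive

variable {n : ℕ} {ψ : Eucl n → EReal}

lemma coe_add_norm_div_le_of_convex_epi (hconv : Convex ℝ (epi ψ)) {c₀ R : ℝ} (h0 : ψ 0 = c₀)
    (hR : 0 < R) (hsphere : ∀ y, ‖y‖ = R → ((c₀ + 1 : ℝ) : EReal) < ψ y) {x : Eucl n}
    (hx : R ≤ ‖x‖) : ((c₀ + ‖x‖ / R : ℝ) : EReal) ≤ ψ x := by
  refine EReal.le_of_forall_lt_iff_le.1 fun s hs => EReal.coe_le_coe ?_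
  have hxpos : 0 < ‖x‖ := hR.trans_le hx
  set θ := R / ‖x‖
  have hθ0 : 0 ≤ θ := by positivity
  have hθ1 : θ ≤ 1 := div_le_one_of_le₀ hx (norm_nonneg _)
  have hmem := hconv (show (x, s) ∈ epi ψ from hs.le) (show ((0 : Eucl n), c₀) ∈ epi ψ from h0.le)
    hθ0 (sub_nonneg.2 hθ1) (add_sub_cancel θ 1)
  have hnorm : ‖θ • x‖ = R := by
    rw [norm_smul, Real.norm_of_nonneg hθ0, div_mul_cancel₀ _ hxpos.ne']
  have hcomb : θ • (x, s) + (1 - θ) • ((0 : Eucl n), c₀) = (θ • x, θ * s + (1 - θ) * c₀) := by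
    simp
  rw [hcomb] at hmem
  have hlt := EReal.coe_lt_coe_iff.1 ((hsphere _ hnorm).trans_le hmem)
  have hθx : θ * (‖x‖ / R) = 1 := by simp only [θ]; field_simp
  nlinarith [mul_lt_mul_of_pos_left hlt (div_pos hxpos hR)]

lemma exists_coe_add_mul_norm_le (hbot : ∀ x, ψ x ≠ ⊥) (hconv : Convex ℝ (epi ψ))
    (hlsc : LowerSemicontinuous ψ) (hcoer : Tendsto ψ (cocompact (Eucl n)) (𝓝 ⊤))
    (h0 : ψ 0 ≠ ⊤) : ∃ c ε : ℝ, 0 < ε ∧ ∀ x, ((c + ε * ‖x‖ : ℝ) : EReal) ≤ ψ x := by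
  set c₀ := (ψ 0).toReal
  have hc₀ : ψ 0 = c₀ := (EReal.coe_toReal h0 (hbot 0)).symm
  obtain ⟨R, hR, hout⟩ : ∃ R > 0, ∀ y : Eucl n, R ≤ ‖y‖ → ((c₀ + 1 : ℝ) : EReal) < ψ y := by
    obtain ⟨r, hr⟩ := (isCompact_setOf_le_of_tendsto_cocompact hlsc hcoer (c₀ + 1)).isBounded
      |>.subset_closedBall 0
    refine ⟨max r 0 + 1, by positivity, fun y hy => not_le.1 fun hle => ?_⟩
    linarith [mem_closedBall_zero_iff.1 (hr hle), le_max_left r 0]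
  obtain ⟨m, hm⟩ := hlsc.exists_coe_le_of_isCompact hbot (isCompact_closedBall (0 : Eucl n) R)
  refine ⟨min c₀ (m - 1), R⁻¹, inv_pos.2 hR, fun x => ?_⟩
  rcases le_or_gt ‖x‖ R with hx | hx
  · refine le_trans (EReal.coe_le_coe ?_) (hm x (mem_closedBall_zero_iff.2 hx))
    have : R⁻¹ * ‖x‖ ≤ 1 := by rw [inv_mul_le_iff₀ hR]; linarith
    linarith [min_le_right c₀ (m - 1)]
  · refine le_trans (EReal.coe_le_coe ?_)
      (coe_add_norm_div_le_of_convex_epi hconv hc₀ hR (fun y hy => hout y hy.ge) hx.le)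
    rw [inv_mul_eq_div]
    linarith [min_le_left c₀ (m - 1)]

lemma lintegral_expNeg_lt_top [Nontrivial (Eucl n)] (hbot : ∀ x, ψ x ≠ ⊥)
    (hconv : Convex ℝ (epi ψ)) (hlsc : LowerSemicontinuous ψ)
    (hcoer : Tendsto ψ (cocompact (Eucl n)) (𝓝 ⊤)) (h0 : ψ 0 ≠ ⊤) :
    ∫⁻ x, ENNReal.ofReal (expNeg (ψ x)) < ⊤ := by
  obtain ⟨c, ε, hε, hψ⟩ := exists_coe_add_mul_norm_le hbot hconv hlsc hcoer h0
  refine lt_of_le_of_lt (lintegral_mono fun x => ENNReal.ofReal_le_ofReal ?_)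
    ((integrable_exp_neg_mul_norm volume hε).const_mul (Real.exp (-c))).lintegral_lt_top
  calc expNeg (ψ x) ≤ expNeg ((c + ε * ‖x‖ : ℝ) : EReal) :=
        expNeg_le_expNeg (EReal.coe_ne_bot _) (hψ x)
    _ = Real.exp (-c) * Real.exp (-(ε * ‖x‖)) := by rw [expNeg_coe, ← Real.exp_add]; ring_nf

end Coercive

section Minorants

variable {n N : ℕ} {ψ : Eucl n → EReal} {f : Eucl n → ℝ}

lemma totalMass_eq_toReal_lintegral_of_mem_PN {q : Eucl n → ℝ} (hq : q ∈ PN N f) :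
    totalMass q = (∫⁻ x, ENNReal.ofReal (q x)).toReal := by
  obtain ⟨k, -, -, x, t, -, rfl⟩ := mem_PN_iff.1 hq
  exact integral_eq_lintegral_of_nonneg_ae (.of_forall fun _ => expNeg_nonneg _)
    (measurable_logAffine x t).aestronglyMeasurable

lemma totalMass_nonneg_of_mem_PN {q : Eucl n → ℝ} (hq : q ∈ PN N f) : 0 ≤ totalMass q :=
  totalMass_eq_toReal_lintegral_of_mem_PN hq ▸ ENNReal.toReal_nonneg

lemma lintegral_le_of_mem_PN (hbot : ∀ x, ψ x ≠ ⊥) (hconv : Convex ℝ (epi ψ))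
    (hf : ∀ x, f x = expNeg (ψ x)) {q : Eucl n → ℝ} (hq : q ∈ PN N f) :
    ∫⁻ x, ENNReal.ofReal (q x) ≤ ∫⁻ x, ENNReal.ofReal (f x) := by
  obtain ⟨k, -, -, x, t, hxt, rfl⟩ := mem_PN_iff.1 hq
  refine lintegral_mono fun z => ENNReal.ofReal_le_ofReal ?_
  rw [hf]
  refine expNeg_le_expNeg (hbot z) (le_innerLinearization hconv (fun i => ?_) z)
  simpa [hf, negLog_expNeg (hbot _)] using hxt i

lemma totalMass_le_of_mem_PN (hbot : ∀ x, ψ x ≠ ⊥) (hconv : Convex ℝ (epi ψ))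
    (hf : ∀ x, f x = expNeg (ψ x)) (hfin : ∫⁻ x, ENNReal.ofReal (f x) ≠ ⊤) {q : Eucl n → ℝ}
    (hq : q ∈ PN N f) : totalMass q ≤ (∫⁻ x, ENNReal.ofReal (f x)).toReal :=
  totalMass_eq_toReal_lintegral_of_mem_PN hq ▸
    ENNReal.toReal_mono hfin (lintegral_le_of_mem_PN hbot hconv hf hq)

lemma exists_mem_PN_two_mul_lintegral_le (hbot : ∀ x, ψ x ≠ ⊥) (hconv : Convex ℝ (epi ψ))
    (hlsc : LowerSemicontinuous ψ) (hcoer : Tendsto ψ (cocompact (Eucl n)) (𝓝 ⊤))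
    (hf : ∀ x, f x = expNeg (ψ x)) {u : Eucl n} (hu : ‖u‖ = 1) {g : Eucl n → ℝ}
    (hg : IsSteinerSymmetral u f g) {q : Eucl n → ℝ} (hq : q ∈ PN N g) :
    ∃ q₁ ∈ PN N f, ∃ q₂ ∈ PN N f, 2 * ∫⁻ x, ENNReal.ofReal (q x) ≤
      (∫⁻ x, ENNReal.ofReal (q₁ x)) + ∫⁻ x, ENNReal.ofReal (q₂ x) := by
  obtain ⟨k, hk₁, hkN, y, t, hyt, rfl⟩ := mem_PN_iff.1 hq
  choose z τ μ hz hy h₁ h₂ using fun i =>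
    exists_add_smul_of_isSteinerSymmetral hbot hconv hlsc hcoer hf hu hg (hyt i)
  have hmem (γ : Fin k → ℝ) (hγ : ∀ i, ψ (z i + γ i • u) ≤ t i) :
      logAffine (fun i => z i + γ i • u) t ∈ PN N f :=
    mem_PN_iff.2 ⟨k, hk₁, hkN, _, t, fun i => by rw [hf, negLog_expNeg (hbot _)]; exact hγ i, rfl⟩
  refine ⟨_, hmem (fun i => μ i + τ i) h₁, _, hmem (fun i => μ i - τ i) h₂, ?_⟩
  -- the reflection in `u^⊥` turns the heights `μ - τ` into `τ - μ = 2τ - (μ + τ)`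
  rw [show y = fun i => z i + τ i • u from funext hy,
    ← lintegral_logAffine_add_neg_smul hz t (fun i => μ i - τ i)]
  exact two_mul_lintegral_logAffine_le hu hz t fun i => by ring

lemma exists_mem_PN_two_mul_totalMass_le (hbot : ∀ x, ψ x ≠ ⊥) (hconv : Convex ℝ (epi ψ))
    (hlsc : LowerSemicontinuous ψ) (hcoer : Tendsto ψ (cocompact (Eucl n)) (𝓝 ⊤))
    (hf : ∀ x, f x = expNeg (ψ x)) (hfin : ∫⁻ x, ENNReal.ofReal (f x) ≠ ⊤) {u : Eucl n}
    (hu : ‖u‖ = 1) {g : Eucl n → ℝ} (hg : IsSteinerSymmetral u f g) {q : Eucl n → ℝ}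
    (hq : q ∈ PN N g) :
    ∃ q₁ ∈ PN N f, ∃ q₂ ∈ PN N f, 2 * totalMass q ≤ totalMass q₁ + totalMass q₂ := by
  obtain ⟨q₁, hq₁, q₂, hq₂, hle⟩ :=
    exists_mem_PN_two_mul_lintegral_le hbot hconv hlsc hcoer hf hu hg hq
  have hfin₁ := ne_top_of_le_ne_top hfin (lintegral_le_of_mem_PN hbot hconv hf hq₁)
  have hfin₂ := ne_top_of_le_ne_top hfin (lintegral_le_of_mem_PN hbot hconv hf hq₂)
  refine ⟨q₁, hq₁, q₂, hq₂, ?_⟩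
  have := ENNReal.toReal_mono (ENNReal.add_ne_top.2 ⟨hfin₁, hfin₂⟩) hle
  rwa [ENNReal.toReal_mul, ENNReal.toReal_add hfin₁ hfin₂, ENNReal.toReal_ofNat,
    ← totalMass_eq_toReal_lintegral_of_mem_PN hq, ← totalMass_eq_toReal_lintegral_of_mem_PN hq₁,
    ← totalMass_eq_toReal_lintegral_of_mem_PN hq₂] at this

end Minorants

theorem max_totalMass_minorant_ge_of_steiner_general
    (n N : ℕ)
    (f g : Eucl n → ℝ) (hf : MemLCc f)
    (u : Eucl n) (hu : ‖u‖ = 1) (hg : IsSteinerSymmetral u f g) :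
    sSup {r : ℝ | ∃ q ∈ PN N g, r = totalMass q} ≤
      sSup {r : ℝ | ∃ q ∈ PN N f, r = totalMass q} := by
  obtain ⟨ψ, hbot, hconv, hlsc, hcoer, -, h0, -, hf⟩ := hf
  have : Nontrivial (Eucl n) := nontrivial_of_ne u 0 (norm_ne_zero_iff.1 (hu ▸ one_ne_zero))
  have hfin : ∫⁻ x, ENNReal.ofReal (f x) ≠ ⊤ := by
    simpa only [hf] using (lintegral_expNeg_lt_top hbot hconv hlsc hcoer h0).ne
  have hbdd : BddAbove {r : ℝ | ∃ q ∈ PN N f, r = totalMass q} :=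
    ⟨_, by rintro _ ⟨q, hq, rfl⟩; exact totalMass_le_of_mem_PN hbot hconv hf hfin hq⟩
  refine Real.sSup_le ?_ (Real.sSup_nonneg ?_)
  · rintro _ ⟨q, hq, rfl⟩
    obtain ⟨q₁, hq₁, q₂, hq₂, hle⟩ :=
      exists_mem_PN_two_mul_totalMass_le hbot hconv hlsc hcoer hf hfin hu hg hq
    linarith [le_csSup hbdd ⟨q₁, hq₁, rfl⟩, le_csSup hbdd ⟨q₂, hq₂, rfl⟩]
  · rintro _ ⟨q, hq, rfl⟩
    exact totalMass_nonneg_of_mem_PN hq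

/-- For `f ∈ LC_c(ℝⁿ)` and any hyperplane `H = u^⊥`, the maximum of `J(p)` over
`p ∈ 𝒫_N(f)` is at least the maximum of `J(q)` over `q ∈ 𝒫_N(S_H f)`. -/
theorem max_totalMass_minorant_ge_of_steiner
    (n N : ℕ) (hn : 1 ≤ n) (hN : n + 2 ≤ N)
    (f g : Eucl n → ℝ) (hf : MemLCc f)
    (u : Eucl n) (hu : ‖u‖ = 1) (hg : IsSteinerSymmetral u f g) :
    sSup {r : ℝ | ∃ q ∈ PN N g, r = totalMass q} ≤
      sSup {r : ℝ | ∃ q ∈ PN N f, r = totalMass q} :=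
  max_totalMass_minorant_ge_of_steiner_general n N f g hf u hu hg
end
end

section
/- Let ψ : ℝⁿ → ℝ ∪ {+∞} be convex and let (x_1,t_1),…,(x_N,t_N) ∈ epi(ψ). Then the ψ-convex hull conv_ψ{(x_i,t_i)} — defined as the intersection of all epigraphs epi(φ) over convex functions φ ≥ ψ with {(x_i,t_i)} ⊆ epi(φ) — equals the convex hull of the union of the vertical rays ⋃_{i=1}^N {(x_i,t) : t ≥ t_i}. -/
open MeasureTheory Filter Set Metric

noncomputable section

lemma mem_hull_rays_iff {n N : ℕ} (x : Fin N → Eucl n) (t : Fin N → ℝ) (q : Eucl n × ℝ) :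
    q ∈ convexHull ℝ (verticalRays x t) ↔
      ∃ w : Fin N → ℝ, (∀ i, 0 ≤ w i) ∧ (∑ i, w i) = 1 ∧
        (∑ i, w i • x i) = q.1 ∧ (∑ i, w i * t i) ≤ q.2 := by
  classical
  constructor
  · intro hq
    rw [convexHull_eq] at hq
    obtain ⟨ι, T, w, z, hw0, hw1, hz, hcm⟩ := hq
    have hz' : ∀ j : {j // j ∈ T}, ∃ i, (z j).1 = x i ∧ t i ≤ (z j).2 := fun j => by
      have := hz j j.2
      simpa [verticalRays, mem_iUnion] using this
    choose idx hfst hsnd using hz'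
    have hq_eq : ∑ j ∈ T, w j • z j = q := by
      rw [← Finset.centerMass_eq_of_sum_1 T z hw1]; exact hcm
    refine ⟨fun i => ∑ j ∈ T.attach.filter (fun j => idx j = i), w j, ?_, ?_, ?_, ?_⟩
    · intro i
      exact Finset.sum_nonneg fun j hj => hw0 j j.2
    · rw [Finset.sum_fiberwise T.attach idx (fun j => w j.1), Finset.sum_attach T w]
      exact hw1
    · have : ∀ i : Fin N, (∑ j ∈ T.attach.filter (fun j => idx j = i), w j) • x i
          = ∑ j ∈ T.attach.filter (fun j => idx j = i), w j • x (idx j) := by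
        intro i
        rw [Finset.sum_smul]
        refine Finset.sum_congr rfl fun j hj => ?_
        rw [(Finset.mem_filter.mp hj).2]
      simp_rw [this]
      rw [Finset.sum_fiberwise T.attach idx (fun j => w j • x (idx j))]
      have : ∑ j ∈ T.attach, w j • x (idx j) = ∑ j ∈ T.attach, w j • (z (j:ι)).1 := by
        refine Finset.sum_congr rfl fun j hj => by rw [hfst j]
      rw [this, Finset.sum_attach T (fun j => w j • (z j).1)]
      have := congrArg Prod.fst hq_eq
      simpa [Prod.fst_sum] using this
    · have h1 : ∀ i : Fin N, (∑ j ∈ T.attach.filter (fun j => idx j = i), w j) * t i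
          = ∑ j ∈ T.attach.filter (fun j => idx j = i), w j * t (idx j) := by
        intro i
        rw [Finset.sum_mul]
        refine Finset.sum_congr rfl fun j hj => ?_
        rw [(Finset.mem_filter.mp hj).2]
      simp_rw [h1]
      rw [Finset.sum_fiberwise T.attach idx (fun j => w j * t (idx j))]
      have h2 : ∑ j ∈ T.attach, w j * t (idx j) ≤ ∑ j ∈ T.attach, w j * (z (j:ι)).2 :=
        Finset.sum_le_sum fun j hj => mul_le_mul_of_nonneg_left (hsnd j) (hw0 j j.2)
      refine h2.trans ?_
      rw [Finset.sum_attach T (fun j => w j * (z j).2)]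
      have := congrArg Prod.snd hq_eq
      simp only [Prod.snd_sum] at this
      simp only [Prod.smul_snd, smul_eq_mul] at this
      exact this.le
  · rintro ⟨w, hw0, hw1, hx1, hx2⟩
    set δ := q.2 - ∑ i, w i * t i with hδ
    have hδ0 : 0 ≤ δ := sub_nonneg.mpr hx2
    have hmem : ∀ i : Fin N, (x i, t i + δ) ∈ verticalRays x t := fun i =>
      mem_iUnion.mpr ⟨i, rfl, le_add_of_nonneg_right hδ0⟩
    have hcm : Finset.univ.centerMass w (fun i => (x i, t i + δ)) ∈
        convexHull ℝ (verticalRays x t) :=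
      Finset.centerMass_mem_convexHull _ (fun i _ => hw0 i) (by rw [hw1]; norm_num)
        (fun i _ => hmem i)
    have : Finset.univ.centerMass w (fun i => (x i, t i + δ)) = q := by
      rw [Finset.centerMass_eq_of_sum_1 _ _ hw1]
      apply Prod.ext
      · simpa [Prod.fst_sum] using hx1
      · simp only [Prod.snd_sum, Prod.smul_snd, smul_eq_mul]
        have h3 : ∑ i, w i * (t i + δ) = (∑ i, w i * t i) + (∑ i, w i * δ) := by
          rw [← Finset.sum_add_distrib]
          exact Finset.sum_congr rfl fun i _ => by ring
        rw [h3, ← Finset.sum_mul, hw1]; simp [hδ]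
    rwa [this] at hcm

/-- For convex `ψ` and points `(xᵢ,tᵢ) ∈ epi ψ`, the `ψ`-convex hull — the
intersection of all epigraphs `epi φ` over convex `φ ≥ ψ` whose epigraph contains the points —
equals the convex hull of the union of the vertical rays `{(xᵢ,t) : t ≥ tᵢ}`. -/
theorem psi_convex_hull_eq_convexHull_rays
    (n N : ℕ) (ψ : Eucl n → EReal) (hψ : Convex ℝ (epi ψ))
    (x : Fin N → Eucl n) (t : Fin N → ℝ) (hx : ∀ i, ψ (x i) ≤ ((t i : ℝ) : EReal)) :
    (⋂ φ ∈ {φ : Eucl n → EReal |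
        Convex ℝ (epi φ) ∧ (∀ y, ψ y ≤ φ y) ∧ ∀ i, φ (x i) ≤ ((t i : ℝ) : EReal)},
      epi φ) = convexHull ℝ (verticalRays x t) := by
  classical
  set C := convexHull ℝ (verticalRays x t) with hCdef
  set φ : Eucl n → EReal := fun y => sInf ((fun s : ℝ => (s : EReal)) '' {s | (y, s) ∈ C})
    with hφdef
  have hraysC : verticalRays x t ⊆ C := subset_convexHull ℝ _
  have hraysψ : verticalRays x t ⊆ epi ψ := by
    rintro q hq
    obtain ⟨i, h1, h2⟩ := mem_iUnion.mp hq
    show ψ q.1 ≤ (q.2 : EReal)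
    rw [h1]
    exact (hx i).trans (by exact_mod_cast h2)
  have hCψ : C ⊆ epi ψ := convexHull_min hraysψ hψ
  -- C ⊆ epi φ
  have hCepi : C ⊆ epi φ := by
    intro q hq
    show φ q.1 ≤ (q.2 : EReal)
    refine sInf_le ⟨q.2, ?_, rfl⟩
    simpa using hq
  -- epi φ ⊆ C
  have hepiC : epi φ ⊆ C := by
    rintro ⟨y, s⟩ hqs
    have hqs : φ y ≤ (s : EReal) := hqs
    -- the slice is nonempty
    have hne : {r : ℝ | (y, r) ∈ C}.Nonempty := by
      by_contra h
      rw [Set.not_nonempty_iff_eq_empty] at h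
      rw [hφdef] at hqs
      simp only [h, Set.image_empty, sInf_empty] at hqs
      exact (EReal.coe_lt_top s).not_ge hqs
    obtain ⟨s0, hs0⟩ := hne
    obtain ⟨w0, hw00, hw01, hw02, _⟩ := (mem_hull_rays_iff x t (y, s0)).mp hs0
    set W : Set (Fin N → ℝ) :=
      {w | (∀ i, 0 ≤ w i) ∧ (∑ i, w i) = 1 ∧ (∑ i, w i • x i) = y} with hWdef
    have hw0W : w0 ∈ W := ⟨hw00, hw01, hw02⟩
    have hWclosed : IsClosed W := by
      have : W = (⋂ i, {w : Fin N → ℝ | 0 ≤ w i}) ∩ {w | (∑ i, w i) = 1}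
          ∩ {w | (∑ i, w i • x i) = y} := by
        ext w; simp only [hWdef, mem_setOf_eq, mem_inter_iff, mem_iInter]; tauto
      rw [this]
      refine (IsClosed.inter ?_ ?_).inter ?_
      · exact isClosed_iInter fun i => isClosed_le continuous_const (continuous_apply i)
      · exact isClosed_eq (continuous_finset_sum _ fun i _ => continuous_apply i)
          continuous_const
      · exact isClosed_eq (continuous_finset_sum _ fun i _ =>
          (continuous_apply i).smul continuous_const) continuous_const
    have hWsub : W ⊆ Set.pi Set.univ (fun _ : Fin N => Icc (0 : ℝ) 1) := by
      rintro w ⟨h1, h2, _⟩ i _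
      refine ⟨h1 i, ?_⟩
      calc w i ≤ ∑ j, w j := Finset.single_le_sum (fun j _ => h1 j) (Finset.mem_univ i)
        _ = 1 := h2
    have hWcomp : IsCompact W :=
      (isCompact_univ_pi fun _ => isCompact_Icc).of_isClosed_subset hWclosed hWsub
    obtain ⟨wm, hwmW, hwm⟩ := hWcomp.exists_isMinOn ⟨w0, hw0W⟩
      ((continuous_finset_sum _ fun i _ =>
        (continuous_apply i).mul continuous_const).continuousOn)
    rw [isMinOn_iff] at hwm
    set m := ∑ i, wm i * t i with hmdef
    have hlb : (m : EReal) ≤ φ y := by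
      refine le_sInf ?_
      rintro r ⟨s', hs', rfl⟩
      obtain ⟨w', h0, h1, h2, h3⟩ := (mem_hull_rays_iff x t (y, s')).mp hs'
      have : m ≤ ∑ i, w' i * t i := hwm w' ⟨h0, h1, h2⟩
      exact EReal.coe_le_coe_iff.mpr (this.trans h3)
    have hms : m ≤ s := by exact_mod_cast hlb.trans hqs
    exact (mem_hull_rays_iff x t (y, s)).mpr
      ⟨wm, hwmW.1, hwmW.2.1, hwmW.2.2, hms⟩
  have hepi_eq : epi φ = C := Subset.antisymm hepiC hCepi
  apply Subset.antisymm
  · intro q hq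
    have hφmem : φ ∈ {φ : Eucl n → EReal |
        Convex ℝ (epi φ) ∧ (∀ y, ψ y ≤ φ y) ∧ ∀ i, φ (x i) ≤ ((t i : ℝ) : EReal)} := by
      refine ⟨hepi_eq ▸ convex_convexHull ℝ _, ?_, ?_⟩
      · intro y
        refine le_sInf ?_
        rintro r ⟨s', hs', rfl⟩
        exact hCψ hs'
      · intro i
        refine sInf_le ⟨t i, ?_, rfl⟩
        exact hraysC (mem_iUnion.mpr ⟨i, rfl, le_refl _⟩)
    have := mem_iInter₂.mp hq φ hφmem
    rwa [hepi_eq] at this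
  · intro q hq
    rw [mem_iInter₂]
    rintro φ' ⟨hconv, _, hpts⟩
    refine convexHull_min ?_ hconv hq
    rintro q' hq'
    obtain ⟨i, h1, h2⟩ := mem_iUnion.mp hq'
    show φ' q'.1 ≤ (q'.2 : EReal)
    rw [h1]
    exact (hpts i).trans (by exact_mod_cast h2)
end
end
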